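/- Let G be a graph on V ∪ {t} whose edges are the union of a matching E_A on V ∪ {t} and a matching E_B on V, and let P be the path starting at the tap t. If S ⊆ V is a set of vertices such that (i) t is matched by E_A into S, (ii) within S exactly one vertex is E_A-unmatched or exactly one vertex is E_B-unmatched (consistently with |S| even or odd as in the garden-hose protocol), and (iii) no vertex of S is matched to a vertex outside S by either matching, then every vertex of P lies in S, and the vertices of S not on P decompose into vertex-disjoint cycles alternating between E_A and E_B edges. In particular |S| and the length of P have the same parity. -/

import Mathlib

/-- One step of the water's walk: on even steps Alice's matching (an involution
on `V ∪ {t}`, where `t = none`) is applied, on odd steps Bob's matching (an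
involution on `V`). A fixed point means the vertex is unmatched. -/
def ghStep {α : Type} (A : Option α → Option α) (B : α → α)
    (n : ℕ) (v : Option α) : Option α :=
  if n % 2 = 0 then A v else Option.map B v

/-- Position of the walk after `n` steps, starting at the tap `t = none`. -/
def ghWalk {α : Type} (A : Option α → Option α) (B : α → α) : ℕ → Option α
  | 0 => none
  | n + 1 => ghStep A B n (ghWalk A B n)

/-- Length of the path `P` starting at the tap: the first time the walk halts. -/
noncomputable def ghLen {α : Type} (A : Option α → Option α) (B : α → α) : ℕ :=
  sInf {n | ghStep A B n (ghWalk A B n) = ghWalk A B n}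

/-!
Every step of the walk applies an involution, so the walk is reversible: if it visits the same
vertex at times `a` and `a + 2m + 1`, folding at the midpoint shows that it halts at time `a + m`;
a repetition at even distance can be shifted back to time `0`. As the tap carries only Alice's
edge, the walk therefore cannot revisit the tap before halting, and by finiteness it halts.
Closedness of `S` keeps the whole path inside `S`. The last vertex is unmatched by the matching
used at the halting step, so the consistency condition makes it the unique unmatched vertex of
`S` and fixes the parity of `ghLen`. Finally the vertex set of the path is closed under both
matchings, hence so is its complement: off the path, `S` is perfectly matched by both.
-/

open Function

section

variable {α : Type} {A : Option α → Option α} {B : α → α}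

lemma ghStep_involutive (hA : Involutive A) (hB : Involutive B) (n : ℕ) :
    Involutive (ghStep A B n) := by
  intro v
  unfold ghStep
  split_ifs
  · exact hA v
  · cases v <;> simp [hB _]

lemma ghStep_eq_of_mod_two_eq {m k : ℕ} (h : m % 2 = k % 2) :
    ghStep A B m = ghStep A B k := by
  unfold ghStep
  rw [h]

lemma ghWalk_eq_ghStep_ghWalk_succ (hA : Involutive A) (hB : Involutive B) (n : ℕ) :
    ghWalk A B n = ghStep A B n (ghWalk A B (n + 1)) :=
  (ghStep_involutive hA hB n _).symm

lemma isFixedPt_ghStep_of_ghWalk_eq_add_odd (hA : Involutive A) (hB : Involutive B)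
    {a m : ℕ} (h : ghWalk A B a = ghWalk A B (a + (2 * m + 1))) :
    IsFixedPt (ghStep A B (a + m)) (ghWalk A B (a + m)) := by
  induction m generalizing a with
  | zero => exact h.symm
  | succ m ih =>
    have hfold : ghWalk A B (a + 1) = ghWalk A B (a + 1 + (2 * m + 1)) := by
      rw [ghWalk_eq_ghStep_ghWalk_succ hA hB (a + 1 + (2 * m + 1)),
        ghStep_eq_of_mod_two_eq (m := a + 1 + (2 * m + 1)) (k := a) (by omega),
        show a + 1 + (2 * m + 1) + 1 = a + (2 * (m + 1) + 1) by omega, ← h]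
      rfl
    simpa only [show a + 1 + m = a + (m + 1) by omega] using ih hfold

lemma ghWalk_zero_eq_of_ghWalk_eq_add_two_mul (hA : Involutive A) (hB : Involutive B)
    {a m : ℕ} (h : ghWalk A B a = ghWalk A B (a + 2 * m)) :
    ghWalk A B 0 = ghWalk A B (2 * m) := by
  induction a with
  | zero => simpa using h
  | succ a ih =>
    refine ih ?_
    rw [ghWalk_eq_ghStep_ghWalk_succ hA hB a, h, ghWalk_eq_ghStep_ghWalk_succ hA hB (a + 2 * m),
      ghStep_eq_of_mod_two_eq (m := a) (k := a + 2 * m) (by omega),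
      show a + 1 + 2 * m = a + 2 * m + 1 by omega]

lemma exists_isFixedPt_lt_of_ghWalk_eq_none (hA : Involutive A) (hB : Involutive B)
    {n : ℕ} (hn : 0 < n) (h : ghWalk A B n = none) :
    ∃ m < n, IsFixedPt (ghStep A B m) (ghWalk A B m) := by
  have halt_of_odd : ∀ m, ghWalk A B (2 * m + 1) = none →
      IsFixedPt (ghStep A B m) (ghWalk A B m) := fun m hm => by
    simpa using isFixedPt_ghStep_of_ghWalk_eq_add_odd hA hB (a := 0) (m := m)
      (by simpa [ghWalk] using hm.symm)
  obtain ⟨m, rfl | rfl⟩ := Nat.even_or_odd' n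
  · -- Bob's step fixes the tap, so an even-time return is preceded by an odd-time one.
    obtain ⟨m, rfl⟩ : ∃ k, m = k + 1 := Nat.exists_eq_succ_of_ne_zero (by omega)
    have hstep : ghWalk A B (2 * (m + 1)) = Option.map B (ghWalk A B (2 * m + 1)) := by
      simp [ghWalk, ghStep, Nat.mul_succ]
    exact ⟨m, by omega, halt_of_odd m (Option.map_eq_none_iff.mp (hstep ▸ h))⟩
  · exact ⟨m, by omega, halt_of_odd m h⟩

lemma exists_isFixedPt_ghStep [Finite α] (hA : Involutive A) (hB : Involutive B) :
    ∃ n, IsFixedPt (ghStep A B n) (ghWalk A B n) := by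
  suffices ∀ i j, i < j → ghWalk A B i = ghWalk A B j →
      ∃ n, IsFixedPt (ghStep A B n) (ghWalk A B n) by
    obtain ⟨i, j, hij, heq⟩ := Finite.exists_ne_map_eq_of_infinite (ghWalk A B)
    rcases hij.lt_or_gt with h | h
    exacts [this i j h heq, this j i h heq.symm]
  intro i j hij heq
  obtain ⟨d, rfl⟩ := Nat.exists_eq_add_of_lt hij
  rw [add_assoc] at heq
  obtain ⟨m, hd | hd⟩ := Nat.even_or_odd' (d + 1)
  all_goals rw [hd] at heq
  · have hret := ghWalk_zero_eq_of_ghWalk_eq_add_two_mul hA hB heq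
    obtain ⟨n, -, hn⟩ := exists_isFixedPt_lt_of_ghWalk_eq_none hA hB (by omega) hret.symm
    exact ⟨n, hn⟩
  · exact ⟨_, isFixedPt_ghStep_of_ghWalk_eq_add_odd hA hB heq⟩

lemma ghWalk_ne_none_of_le_ghLen (hA : Involutive A) (hB : Involutive B)
    {n : ℕ} (hn : 0 < n) (hnL : n ≤ ghLen A B) : ghWalk A B n ≠ none := fun h => by
  obtain ⟨m, hm, hfix⟩ := exists_isFixedPt_lt_of_ghWalk_eq_none hA hB hn h
  exact Nat.notMem_of_lt_sInf (lt_of_lt_of_le hm hnL) hfix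

lemma ghWalk_mem_of_mapsTo {S : Set α} (hA0 : ∀ b ∈ A none, b ∈ S)
    (hAS : ∀ a ∈ S, ∀ b ∈ A (some a), b ∈ S) (hBS : ∀ a ∈ S, B a ∈ S) (n : ℕ) :
    ∀ a ∈ ghWalk A B n, a ∈ S := by
  induction n with
  | zero => simp [ghWalk]
  | succ n ih =>
    unfold ghWalk ghStep
    cases hw : ghWalk A B n with
    | none =>
      split_ifs
      exacts [hA0, by simp]
    | some a =>
      have ha := ih a hw
      split_ifs
      exacts [hAS a ha, by simpa using hBS a ha]

lemma exists_ghStep_ghWalk_eq_ghWalk (hA : Involutive A) (hB : Involutive B) {L n : ℕ}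
    (hL : IsFixedPt (ghStep A B L) (ghWalk A B L)) (hn : n ≤ L) (k : ℕ) :
    ∃ m ≤ L, ghStep A B k (ghWalk A B n) = ghWalk A B m := by
  by_cases hk : k % 2 = n % 2
  · rw [ghStep_eq_of_mod_two_eq hk]
    rcases hn.lt_or_eq with hn | rfl
    exacts [⟨n + 1, hn, rfl⟩, ⟨n, le_rfl, hL⟩]
  · cases n with
    | zero => exact ⟨0, Nat.zero_le _, by simp [ghWalk, ghStep, hk]⟩
    | succ n =>
      rw [ghStep_eq_of_mod_two_eq (k := n) (by omega), ← ghWalk_eq_ghStep_ghWalk_succ hA hB]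
      exact ⟨n, by omega, rfl⟩

lemma ghStep_ne_ghWalk_of_ne_ghWalk (hA : Involutive A) (hB : Involutive B) {L : ℕ}
    (hL : IsFixedPt (ghStep A B L) (ghWalk A B L)) {o : Option α}
    (ho : ∀ n ≤ L, ghWalk A B n ≠ o) (k : ℕ) :
    ∀ n ≤ L, ghWalk A B n ≠ ghStep A B k o := by
  intro n hn h
  obtain ⟨m, hm, hstep⟩ := exists_ghStep_ghWalk_eq_ghWalk hA hB hL hn k
  exact ho m hm (by rw [← hstep, h, ghStep_involutive hA hB k o])

lemma mod_two_eq_card_and_matched_of_isFixedPt_ghStep {S : Finset α}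
    (hcons :
      if S.card % 2 = 0 then
        (∃! a : α, a ∈ S ∧ A (some a) = some a) ∧ ∀ a ∈ S, B a ≠ a
      else
        (∀ a ∈ S, A (some a) ≠ some a) ∧ ∃! a : α, a ∈ S ∧ B a = a)
    {L : ℕ} {aL : α} (haL : aL ∈ S) (hfix : IsFixedPt (ghStep A B L) (some aL)) :
    L % 2 = S.card % 2 ∧ ∀ a ∈ S, a ≠ aL → A (some a) ≠ some a ∧ B a ≠ a := by
  have hfixA : L % 2 = 0 → A (some aL) = some aL := fun h => by
    simpa [IsFixedPt, ghStep, h] using hfix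
  have hfixB : L % 2 = 1 → B aL = aL := fun h => by
    simpa [IsFixedPt, ghStep, h] using hfix
  split_ifs at hcons with hc
  · obtain ⟨hAuniq, hBfree⟩ := hcons
    have hL : L % 2 = 0 := by
      by_contra h
      exact hBfree aL haL (hfixB (by omega))
    exact ⟨by omega, fun a ha hne =>
      ⟨fun hAa => hne (hAuniq.unique ⟨ha, hAa⟩ ⟨haL, hfixA hL⟩), hBfree a ha⟩⟩
  · obtain ⟨hAfree, hBuniq⟩ := hcons
    have hL : L % 2 = 1 := by
      by_contra h
      exact hAfree aL haL (hfixA (by omega))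
    exact ⟨by omega, fun a ha hne =>
      ⟨hAfree a ha, fun hBa => hne (hBuniq.unique ⟨ha, hBa⟩ ⟨haL, hfixB hL⟩)⟩⟩

end

theorem gardenhose_consistent_set_general {α : Type} [Fintype α]
    (A : Option α → Option α) (B : α → α)
    (hA : Function.Involutive A) (hB : Function.Involutive B)
    (S : Finset α)
    (htap : ∃ a ∈ S, A none = some a)
    (hclA : ∀ a ∈ S, ∀ b : α, A (some a) = some b → b ∈ S)
    (hclB : ∀ a ∈ S, B a ∈ S)
    (hcons :
      if S.card % 2 = 0 then
        (∃! a : α, a ∈ S ∧ A (some a) = some a) ∧ ∀ a ∈ S, B a ≠ a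
      else
        (∀ a ∈ S, A (some a) ≠ some a) ∧ ∃! a : α, a ∈ S ∧ B a = a) :
    {n : ℕ | ghStep A B n (ghWalk A B n) = ghWalk A B n}.Nonempty ∧
    (∀ n : ℕ, 1 ≤ n → n ≤ ghLen A B → ∃ a ∈ S, ghWalk A B n = some a) ∧
    (∀ a ∈ S, (∀ n ≤ ghLen A B, ghWalk A B n ≠ some a) →
      A (some a) ≠ some a ∧ A (some a) ≠ none ∧ B a ≠ a ∧
      (∀ b : α, A (some a) = some b →
        b ∈ S ∧ ∀ n ≤ ghLen A B, ghWalk A B n ≠ some b) ∧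
      (∀ n ≤ ghLen A B, ghWalk A B n ≠ some (B a))) ∧
    ghLen A B % 2 = S.card % 2 := by
  obtain ⟨a₀, ha₀S, ha₀⟩ := htap
  have hne : {n : ℕ | ghStep A B n (ghWalk A B n) = ghWalk A B n}.Nonempty :=
    exists_isFixedPt_ghStep hA hB
  have hL : IsFixedPt (ghStep A B (ghLen A B)) (ghWalk A B (ghLen A B)) := Nat.sInf_mem hne
  have hLpos : 0 < ghLen A B := Nat.pos_of_ne_zero fun h0 => by
    simp [h0, IsFixedPt, ghWalk, ghStep, ha₀] at hL
  have hinS : ∀ n, 1 ≤ n → n ≤ ghLen A B → ∃ a ∈ S, ghWalk A B n = some a := by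
    intro n hn hnL
    obtain ⟨a, ha⟩ := Option.ne_none_iff_exists'.mp (ghWalk_ne_none_of_le_ghLen hA hB hn hnL)
    refine ⟨a, ghWalk_mem_of_mapsTo (S := S) (fun b hb => ?_) hclA hclB n a ha, ha⟩
    rw [Option.mem_def, ha₀, Option.some_inj] at hb
    exact hb ▸ ha₀S
  obtain ⟨aL, haL, hwL⟩ := hinS _ hLpos le_rfl
  obtain ⟨hpar, hmatched⟩ :=
    mod_two_eq_card_and_matched_of_isFixedPt_ghStep hcons haL (hwL ▸ hL)
  refine ⟨hne, hinS, fun a ha hoff => ?_, hpar⟩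
  have hoffA := ghStep_ne_ghWalk_of_ne_ghWalk hA hB hL hoff 0
  have hoffB := ghStep_ne_ghWalk_of_ne_ghWalk hA hB hL hoff 1
  simp only [ghStep, Nat.zero_mod, Nat.one_mod, if_true, one_ne_zero, if_false,
    Option.map_some] at hoffA hoffB
  obtain ⟨hAa, hBa⟩ := hmatched a ha (by rintro rfl; exact hoff _ le_rfl hwL)
  exact ⟨hAa, fun h => hoffA 0 (Nat.zero_le _) h.symm, hBa,
    fun b hb => ⟨hclA a ha b hb, hb ▸ hoffA⟩, hoffB⟩

/-- Let the edges on `V ∪ {t}` be the union of a matching `E_A` on `V ∪ {t}`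
(the involution `A`, with `t = none`) and a matching `E_B` on `V` (the
involution `B`), and let `P` be the path starting at `t`. Suppose `S ⊆ V`
satisfies: (i) `t` is matched by `E_A` into `S`; (iii) no vertex of `S` is
matched to a vertex outside `S` by either matching; and (ii) if `|S|` is even
then exactly one vertex of `S` is `E_A`-unmatched and every vertex of `S` is
`E_B`-matched, while if `|S|` is odd then every vertex of `S` is `E_A`-matched
and exactly one vertex of `S` is `E_B`-unmatched. Then the path `P` is finite,
every vertex of `P` (other than `t`) lies in `S`, the vertices of `S` not on
`P` are perfectly matched among themselves by both `E_A` and `E_B` (hence they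
decompose into vertex-disjoint cycles alternating between `E_A`- and
`E_B`-edges), and in particular `|S|` and the length of `P` have the same
parity. -/
theorem gardenhose_consistent_set {α : Type} [Fintype α] [DecidableEq α]
    (A : Option α → Option α) (B : α → α)
    (hA : Function.Involutive A) (hB : Function.Involutive B)
    (S : Finset α)
    (htap : ∃ a ∈ S, A none = some a)
    (hclA : ∀ a ∈ S, ∀ b : α, A (some a) = some b → b ∈ S)
    (hclB : ∀ a ∈ S, B a ∈ S)
    (hcons :
      if S.card % 2 = 0 then
        (∃! a : α, a ∈ S ∧ A (some a) = some a) ∧ ∀ a ∈ S, B a ≠ a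
      else
        (∀ a ∈ S, A (some a) ≠ some a) ∧ ∃! a : α, a ∈ S ∧ B a = a) :
    {n : ℕ | ghStep A B n (ghWalk A B n) = ghWalk A B n}.Nonempty ∧
    (∀ n : ℕ, 1 ≤ n → n ≤ ghLen A B → ∃ a ∈ S, ghWalk A B n = some a) ∧
    (∀ a ∈ S, (∀ n ≤ ghLen A B, ghWalk A B n ≠ some a) →
      A (some a) ≠ some a ∧ A (some a) ≠ none ∧ B a ≠ a ∧
      (∀ b : α, A (some a) = some b →
        b ∈ S ∧ ∀ n ≤ ghLen A B, ghWalk A B n ≠ some b) ∧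
      (∀ n ≤ ghLen A B, ghWalk A B n ≠ some (B a))) ∧
    ghLen A B % 2 = S.card % 2 :=
  gardenhose_consistent_set_general A B hA hB S htap hclA hclB hcons
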